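/- Let K be an algebraically closed field, let m_1 < m_2 < … < m_n be positive integers with gcd(m_1, …, m_n) = 1, and suppose that for each 3 ≤ i ≤ n there are nonnegative integers a_i, b_i, c_i, α_i, β_i, γ_i with m_i = c_i m_{i−1} + b_i m_2 + a_i m_1 = γ_i m_{i−1} − β_i m_2 − α_i m_1, m_{i−1} > a_i, b_i, α_i, β_i, β_3 = b_3 = 0, γ_i − β_i − α_i − 1 ≥ 0, and m_1 ≥ β_i (m_2 − m_1). Then the set of common zeros in K^{n+1} of the n − 1 polynomials F_1, …, F_{n−1} is exactly the affine cone over the monomial curve C(m_1, …, m_n), namely the set {(u^{m_n}, u^{m_n − m_1} v^{m_1}, …, u^{m_n − m_{n−1}} v^{m_{n−1}}, v^{m_n}) : u, v ∈ K}. In particular, C(m_1, …, m_n) ⊆ P^n is a set-theoretic complete intersection. -/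

import Mathlib

/-- The polynomial `F_{i-1} = x_{i-1}^{m_i} + G_{i-1} + H_{i-1}` of Lemma 2 of the
paper, with coefficients in a commutative ring `K`, in variables `x_j` indexed by
`j : ℕ` (only `x_0, x_1, x_2, x_{i-1}, x_i` occur). -/
noncomputable def Fpoly (K : Type*) [CommRing K] (m : ℕ → ℕ)
    (i a b c α β γ : ℕ) : MvPolynomial ℕ K :=
  MvPolynomial.X (i - 1) ^ m i
    + ∑ k ∈ Finset.Icc 1 (m (i - 1) - m 1),
        MvPolynomial.C ((-1 : K) ^ k * ((m (i - 1)).choose k : K)) *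
          (MvPolynomial.X 1 ^ (k * α) * MvPolynomial.X 2 ^ (k * β) *
            MvPolynomial.X (i - 1) ^ (m i - k * γ) * MvPolynomial.X i ^ k *
            MvPolynomial.X 0 ^ (k * (γ - β - α - 1)))
    + ∑ k ∈ Finset.Icc (m (i - 1) - m 1 + 1) (m (i - 1)),
        MvPolynomial.C ((-1 : K) ^ k * ((m (i - 1)).choose k : K)) *
          (MvPolynomial.X 1 ^ (a * (m (i - 1) - k)) *
            MvPolynomial.X 2 ^ (b * (m (i - 1) - k)) *
            MvPolynomial.X (i - 1) ^ (c * (m (i - 1) - k)) * MvPolynomial.X i ^ k *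
            MvPolynomial.X 0 ^
              (k * (a + b + c - 1) - b * (m (i - 1) - m 2) - a * (m (i - 1) - m 1)))

/-!
Where `x₀ ≠ 0`, write `x = x₀ • (1, y)`. Each `F_{i-1}` is homogeneous of degree `m_i`, and as
soon as `y₁, y₂, y_{i-1}` satisfy the binomial relations `y_j ^ m_l = y_l ^ m_j` of the curve,
the exponent conditions turn `F_{i-1}(1, y)` into the binomial expansion
`y_{i-1} ^ m_i * (1 - y₁ ^ α_i * y₂ ^ β_i * y_i / y_{i-1} ^ γ_i) ^ m_{i-1}`: modulo the relations,
the monomials of the second sum are those of the expansion. Hence `F_{i-1} = 0` propagates the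
relations from `y₁, …, y_{i-1}` to `y_i`, and pairwise related nonzero `y_j` are of the form
`t ^ m_j` because `gcd m = 1` (Bézout); if `y₁ = 0`, all `y_j` vanish. Where `x₀ = 0`, `F_1`
kills `x₁`, after which `F_{i-1}` reduces to `x_{i-1} ^ m_i` (for `F_2` thanks to `b_3 = 0`), so
only `x_n` survives.
-/

open Finset

theorem Finset.exists_sum_mul_eq_one_of_gcd_eq_one {ι : Type*} {s : Finset ι} {m : ι → ℕ}
    (hgcd : s.gcd m = 1) : ∃ e : ι → ℤ, ∑ j ∈ s, (m j : ℤ) * e j = 1 := by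
  obtain ⟨e, he⟩ := s.gcd_eq_sum_mul fun j => (m j : ℤ)
  refine ⟨e, he ▸ ?_⟩
  have hdvd : (s.gcd fun j => (m j : ℤ)).natAbs ∣ s.gcd m :=
    Finset.dvd_gcd fun j hj => Int.natAbs_dvd_natAbs.mpr (Finset.gcd_dvd hj)
  rw [hgcd, Nat.dvd_one] at hdvd
  rw [← Finset.normalize_gcd, ← Int.abs_eq_normalize, ← Int.natCast_natAbs, hdvd, Nat.cast_one]

theorem exists_pow_eq_of_pow_eq_pow {ι G₀ : Type*} [CommGroupWithZero G₀] {s : Finset ι}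
    {m : ι → ℕ} {y : ι → G₀} (hgcd : s.gcd m = 1) (hy : ∀ j ∈ s, y j ≠ 0)
    (hrel : ∀ j ∈ s, ∀ l ∈ s, y j ^ m l = y l ^ m j) :
    ∃ t : G₀, ∀ j ∈ s, t ^ m j = y j := by
  classical
  obtain ⟨e, he⟩ := Finset.exists_sum_mul_eq_one_of_gcd_eq_one hgcd
  refine ⟨∏ j ∈ s, y j ^ e j, fun l hl => ?_⟩
  have hsum : ∀ u : Finset ι, ∏ j ∈ u, y l ^ ((m j : ℤ) * e j)
      = y l ^ ∑ j ∈ u, (m j : ℤ) * e j := by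
    intro u
    induction u using Finset.induction_on with
    | empty => simp
    | insert j u hj ih => rw [prod_insert hj, sum_insert hj, zpow_add₀ (hy l hl), ih]
  calc (∏ j ∈ s, y j ^ e j) ^ m l = ∏ j ∈ s, (y j ^ m l) ^ e j := by
        rw [← prod_pow]
        exact prod_congr rfl fun j _ => by
          rw [← zpow_natCast, ← zpow_natCast, ← zpow_mul, ← zpow_mul, mul_comm]
    _ = ∏ j ∈ s, y l ^ ((m j : ℤ) * e j) := prod_congr rfl fun j hj => by
        rw [hrel j hj l hl, zpow_mul, zpow_natCast]
    _ = y l := by rw [hsum, he, zpow_one]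

theorem pow_eq_pow_of_mul_eq_pow {M₀ : Type*} [CommMonoidWithZero M₀] [IsCancelMulZero M₀]
    {y₁ y₂ y y' z : M₀} {m₁ m₂ m m' n α β γ : ℕ} (hz : z ≠ 0)
    (h₁ : y₁ ^ n = z ^ m₁) (h₂ : y₂ ^ n = z ^ m₂) (h : y ^ n = z ^ m)
    (hexp : m' + β * m₂ + α * m₁ = γ * m) (hy' : y₁ ^ α * y₂ ^ β * y' = y ^ γ) :
    y' ^ n = z ^ m' := by
  have key := congrArg (· ^ n) hy'
  simp only [mul_pow, ← pow_mul] at key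
  rw [mul_comm α, mul_comm β, mul_comm γ, pow_mul, pow_mul, pow_mul, h₁, h₂, h, ← pow_mul,
    ← pow_mul, ← pow_mul, mul_comm m, ← hexp, pow_add, pow_add, mul_comm m₁, mul_comm m₂] at key
  refine mul_left_cancel₀ (pow_ne_zero (β * m₂ + α * m₁) hz) ?_
  calc z ^ (β * m₂ + α * m₁) * y' ^ n = z ^ (α * m₁) * z ^ (β * m₂) * y' ^ n := by
        rw [pow_add]; ac_rfl
    _ = z ^ (β * m₂ + α * m₁) * z ^ m' := by rw [key, pow_add]; ac_rfl

theorem one_sub_pow_eq_sum {R : Type*} [CommRing R] (r : R) (n : ℕ) :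
    (1 - r) ^ n = ∑ k ∈ range (n + 1), (-1) ^ k * (n.choose k : R) * r ^ k := by
  rw [sub_eq_neg_add, add_pow]
  refine sum_congr rfl fun k _ => ?_
  rw [one_pow, neg_pow]
  ring

theorem Finset.sum_range_succ_eq_add_sum_Icc_add_sum_Icc {A : Type*} [AddCommMonoid A]
    (f : ℕ → A) {N M : ℕ} (hN : N ≤ M) :
    ∑ k ∈ range (M + 1), f k = f 0 + ∑ k ∈ Icc 1 N, f k + ∑ k ∈ Icc (N + 1) M, f k := by
  rw [range_eq_Ico, sum_eq_sum_Ico_succ_bot (Nat.succ_pos M), add_assoc,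
    ← Ico_add_one_right_eq_Icc, ← Ico_add_one_right_eq_Icc,
    sum_Ico_consecutive f (by omega) (by omega)]
  rfl

theorem sub_mul_pow_eq_pow_mul {R : Type*} [CommRing R] {m₁ m₂ : ℕ} (h : m₁ ≤ m₂)
    (t x₁ x₂ : R) :
    (t * x₁) ^ m₂ - (t * x₂) ^ m₁ * t ^ (m₂ - m₁) = t ^ m₂ * (x₁ ^ m₂ - x₂ ^ m₁) := by
  obtain ⟨d, rfl⟩ := Nat.exists_eq_add_of_le h
  rw [Nat.add_sub_cancel_left]
  ring

namespace MonomialCurve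

/-- The hypotheses of the theorem at one index `i`, with `M = m_{i-1}` and `mᵢ = m_i`. -/
structure Admissible (m₁ m₂ M mᵢ a b c α β γ : ℕ) : Prop where
  m₁_pos : 0 < m₁
  m₁_lt_m₂ : m₁ < m₂
  m₂_le : m₂ ≤ M
  lt_mᵢ : M < mᵢ
  mᵢ_eq : mᵢ = c * M + b * m₂ + a * m₁
  mᵢ_add_eq : mᵢ + β * m₂ + α * m₁ = γ * M
  a_lt : a < M
  b_lt : b < M
  add_one_le_γ : β + α + 1 ≤ γ
  β_mul_le : β * (m₂ - m₁) ≤ m₁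
  α_eq : α = if a = 0 then 0 else M - a
  β_eq : β = if b = 0 then 0 else M - b

/-- `F_{i-1}` evaluated at `(x₀, x₁, x₂, x_{i-1}, x_i) = (x₀, x₁, x₂, y, z)`, with `M = m_{i-1}`
and `mᵢ = m_i`. -/
def Fval {K : Type*} [CommRing K] (m₁ m₂ M mᵢ a b c α β γ : ℕ) (x₀ x₁ x₂ y z : K) : K :=
  y ^ mᵢ
    + ∑ k ∈ Icc 1 (M - m₁), (-1) ^ k * (M.choose k : K) *
        (x₁ ^ (k * α) * x₂ ^ (k * β) * y ^ (mᵢ - k * γ) * z ^ k * x₀ ^ (k * (γ - β - α - 1)))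
    + ∑ k ∈ Icc (M - m₁ + 1) M, (-1) ^ k * (M.choose k : K) *
        (x₁ ^ (a * (M - k)) * x₂ ^ (b * (M - k)) * y ^ (c * (M - k)) * z ^ k *
          x₀ ^ (k * (a + b + c - 1) - b * (M - m₂) - a * (M - m₁)))

theorem eval_Fpoly {K : Type*} [CommRing K] (m : ℕ → ℕ) (i a b c α β γ : ℕ) (x : ℕ → K) :
    MvPolynomial.eval x (Fpoly K m i a b c α β γ)
      = Fval (m 1) (m 2) (m (i - 1)) (m i) a b c α β γ (x 0) (x 1) (x 2) (x (i - 1)) (x i) := by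
  simp only [Fpoly, Fval, map_add, map_sum, map_mul, map_pow, MvPolynomial.eval_X,
    MvPolynomial.eval_C]

namespace Admissible

variable {m₁ m₂ M mᵢ a b c α β γ : ℕ}

theorem m₁_le (H : Admissible m₁ m₂ M mᵢ a b c α β γ) : m₁ ≤ M :=
  H.m₁_lt_m₂.le.trans H.m₂_le

theorem M_pos (H : Admissible m₁ m₂ M mᵢ a b c α β γ) : 0 < M :=
  H.m₁_pos.trans_le H.m₁_le

theorem m₂_pos (H : Admissible m₁ m₂ M mᵢ a b c α β γ) : 0 < m₂ :=
  H.m₁_pos.trans H.m₁_lt_m₂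

theorem mᵢ_pos (H : Admissible m₁ m₂ M mᵢ a b c α β γ) : 0 < mᵢ :=
  H.M_pos.trans H.lt_mᵢ

theorem α_add (H : Admissible m₁ m₂ M mᵢ a b c α β γ) :
    α + a = if a = 0 then 0 else M := by
  have := H.a_lt; rw [H.α_eq]; split_ifs <;> omega

theorem β_add (H : Admissible m₁ m₂ M mᵢ a b c α β γ) :
    β + b = if b = 0 then 0 else M := by
  have := H.b_lt; rw [H.β_eq]; split_ifs <;> omega

theorem γ_eq (H : Admissible m₁ m₂ M mᵢ a b c α β γ) :
    γ = c + (if b = 0 then 0 else m₂) + (if a = 0 then 0 else m₁) := by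
  refine Nat.eq_of_mul_eq_mul_right H.M_pos ?_
  have hα := H.α_add
  have hβ := H.β_add
  have h := H.mᵢ_add_eq
  rw [H.mᵢ_eq] at h
  split_ifs at hα hβ ⊢ <;> subst_vars <;> nlinarith

theorem one_le_add (H : Admissible m₁ m₂ M mᵢ a b c α β γ) : 1 ≤ a + b + c := by
  have h := H.lt_mᵢ
  rw [H.mᵢ_eq] at h
  by_contra! h'
  simp_all

theorem mul_γ_add_le (H : Admissible m₁ m₂ M mᵢ a b c α β γ) {k : ℕ} (hk : k ≤ M - m₁) :
    k * γ + m₁ ≤ mᵢ + β * (m₂ - m₁) := by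
  have h1 : k * γ ≤ (M - m₁) * γ := Nat.mul_le_mul_right γ hk
  have h2 : (M - m₁) * γ + m₁ * γ = γ * M := by
    rw [← add_mul, Nat.sub_add_cancel H.m₁_le, mul_comm]
  have h3 : m₁ * (β + α + 1) ≤ m₁ * γ := Nat.mul_le_mul_left m₁ H.add_one_le_γ
  have h4 : β * (m₂ - m₁) + β * m₁ = β * m₂ := by
    rw [← mul_add, Nat.sub_add_cancel H.m₁_lt_m₂.le]
  have h5 := H.mᵢ_add_eq
  nlinarith

theorem mul_γ_le (H : Admissible m₁ m₂ M mᵢ a b c α β γ) {k : ℕ} (hk : k ≤ M - m₁) :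
    k * γ ≤ mᵢ := by
  have := H.mul_γ_add_le hk
  have := H.β_mul_le
  omega

theorem sub_one_mul_add_le (H : Admissible m₁ m₂ M mᵢ a b c α β γ) :
    (m₁ - 1) * (a + b + c - 1) + M ≤ mᵢ := by
  have hs := H.one_le_add
  have hm₁ := H.m₁_le
  have hm₂ := H.m₁_lt_m₂
  have key : M - m₁ + 1 ≤ c * (M - m₁ + 1) + b * (m₂ - m₁ + 1) + a := by
    rcases Nat.eq_zero_or_pos c with hc | hc
    · have hγ := H.γ_eq
      have hα := H.α_add
      have hβ := H.β_add
      have h := H.add_one_le_γ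
      have hb : b ≠ 0 → b + (m₂ - m₁) ≤ b * (m₂ - m₁ + 1) := fun hb => by
        rw [mul_add, mul_one, add_comm]
        exact Nat.add_le_add_right (Nat.le_mul_of_pos_left _ (Nat.pos_of_ne_zero hb)) b
      subst hc
      split_ifs at hα hβ hγ <;> omega
    · nlinarith
  have := H.mᵢ_eq
  zify [hs, H.m₁_pos, hm₁, hm₂.le] at key this ⊢
  nlinarith

/-- In particular, none of the subtractions in the exponent of `x₀` in the second sum of `F_{i-1}`
truncates. -/
theorem x₀_exponent_add (H : Admissible m₁ m₂ M mᵢ a b c α β γ) {k : ℕ} (hk₁ : M - m₁ < k)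
    (hk : k ≤ M) :
    k * (a + b + c - 1) - b * (M - m₂) - a * (M - m₁) + M + (M - k) * (a + b + c - 1) = mᵢ := by
  have hs := H.one_le_add
  have hm₁ := H.m₁_le
  have hm₂ := H.m₂_le
  have hsum : k * (a + b + c - 1) + M + (M - k) * (a + b + c - 1)
      = b * (M - m₂) + a * (M - m₁) + mᵢ := by
    have := H.mᵢ_eq
    zify [hs, hk, hm₁, hm₂] at this ⊢
    linear_combination -this
  have hle : (M - k) * (a + b + c - 1) ≤ (m₁ - 1) * (a + b + c - 1) :=
    Nat.mul_le_mul_right _ (by omega)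
  have := H.sub_one_mul_add_le
  omega

theorem monomial_eq {K : Type*} [Field K] (H : Admissible m₁ m₂ M mᵢ a b c α β γ)
    {x₁ x₂ y : K} (hx₁ : x₁ ≠ 0) (hx₂ : x₂ ≠ 0) (h₁ : x₁ ^ M = y ^ m₁) (h₂ : x₂ ^ M = y ^ m₂)
    {k : ℕ} (hk : k ≤ M) :
    x₁ ^ (a * (M - k)) * x₂ ^ (b * (M - k)) * y ^ (c * (M - k)) * y ^ (k * γ)
      = y ^ mᵢ * x₁ ^ (k * α) * x₂ ^ (k * β) := by
  have e₁ : x₁ ^ (α + a) = y ^ (if a = 0 then 0 else m₁) := by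
    rw [H.α_add]; split_ifs <;> simp [h₁]
  have e₂ : x₂ ^ (β + b) = y ^ (if b = 0 then 0 else m₂) := by
    rw [H.β_add]; split_ifs <;> simp [h₂]
  have hγ := H.γ_eq
  have hmᵢ := H.mᵢ_eq
  generalize (if a = 0 then 0 else m₁) = eₐ at e₁ hγ
  generalize (if b = 0 then 0 else m₂) = e_b at e₂ hγ
  obtain ⟨j, rfl⟩ := Nat.exists_eq_add_of_le hk
  rw [Nat.add_sub_cancel_left]
  refine mul_right_cancel₀ (mul_ne_zero (pow_ne_zero (k * a) hx₁) (pow_ne_zero (k * b) hx₂)) ?_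
  calc x₁ ^ (a * j) * x₂ ^ (b * j) * y ^ (c * j) * y ^ (k * γ) * (x₁ ^ (k * a) * x₂ ^ (k * b))
      = (x₁ ^ (k + j)) ^ a * (x₂ ^ (k + j)) ^ b * y ^ (c * j + k * γ) := by ring
    _ = y ^ (mᵢ + k * eₐ + k * e_b) := by rw [h₁, h₂, hmᵢ, hγ]; ring
    _ = y ^ mᵢ * (x₁ ^ (α + a)) ^ k * (x₂ ^ (β + b)) ^ k := by rw [e₁, e₂]; ring
    _ = y ^ mᵢ * x₁ ^ (k * α) * x₂ ^ (k * β) * (x₁ ^ (k * a) * x₂ ^ (k * b)) := by ring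

theorem Fval_one_eq {K : Type*} [Field K] (H : Admissible m₁ m₂ M mᵢ a b c α β γ)
    {x₁ x₂ y : K} (hx₁ : x₁ ≠ 0) (hx₂ : x₂ ≠ 0) (hy : y ≠ 0) (h₁ : x₁ ^ M = y ^ m₁)
    (h₂ : x₂ ^ M = y ^ m₂) (z : K) :
    Fval m₁ m₂ M mᵢ a b c α β γ 1 x₁ x₂ y z
      = y ^ mᵢ * (1 - x₁ ^ α * x₂ ^ β * z / y ^ γ) ^ M := by
  rw [one_sub_pow_eq_sum, mul_sum,
    Finset.sum_range_succ_eq_add_sum_Icc_add_sum_Icc _ (Nat.sub_le M m₁)]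
  simp only [Fval, one_pow, mul_one]
  refine congrArg₂ (· + ·) (congrArg₂ (· + ·) (by simp) ?_) ?_
  · refine sum_congr rfl fun k hk => ?_
    rw [pow_sub₀ _ hy (H.mul_γ_le (Finset.mem_Icc.mp hk).2)]
    ring
  · refine sum_congr rfl fun k hk => ?_
    have hmon := H.monomial_eq hx₁ hx₂ h₁ h₂ (Finset.mem_Icc.mp hk).2
    rw [div_pow, mul_pow, mul_pow, ← pow_mul, ← pow_mul, ← pow_mul]
    field_simp
    linear_combination (M.choose k * z ^ k : K) * hmon

theorem Fval_one_eq_zero_iff {K : Type*} [Field K] (H : Admissible m₁ m₂ M mᵢ a b c α β γ)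
    {x₁ x₂ y : K} (hx₁ : x₁ ≠ 0) (hx₂ : x₂ ≠ 0) (hy : y ≠ 0) (h₁ : x₁ ^ M = y ^ m₁)
    (h₂ : x₂ ^ M = y ^ m₂) (z : K) :
    Fval m₁ m₂ M mᵢ a b c α β γ 1 x₁ x₂ y z = 0 ↔ x₁ ^ α * x₂ ^ β * z = y ^ γ := by
  rw [H.Fval_one_eq hx₁ hx₂ hy h₁ h₂, mul_eq_zero, or_iff_right (pow_ne_zero _ hy),
    pow_eq_zero_iff H.M_pos.ne', sub_eq_zero, eq_div_iff (pow_ne_zero _ hy), one_mul, eq_comm]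

theorem Fval_one_zero {K : Type*} [Field K] (H : Admissible m₁ m₂ M mᵢ a b c α β γ) (z : K) :
    Fval m₁ m₂ M mᵢ a b c α β γ 1 0 0 0 z = (-1) ^ M * z ^ M := by
  have hM : M ∈ Icc (M - m₁ + 1) M :=
    Finset.mem_Icc.mpr ⟨by have := H.m₁_pos; have := H.m₁_le; omega, le_rfl⟩
  have hfirst : ∀ k ∈ Icc 1 (M - m₁), k * β ≠ 0 ∨ mᵢ - k * γ ≠ 0 := fun k hk => by
    have hk' := H.mul_γ_add_le (Finset.mem_Icc.mp hk).2
    rcases Nat.eq_zero_or_pos β with hβ | hβ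
    · rw [hβ, zero_mul, add_zero] at hk'
      have := H.m₁_pos
      omega
    · exact Or.inl (Nat.mul_ne_zero (by simp at hk; omega) hβ.ne')
  have hsecond : ∀ k ∈ Icc (M - m₁ + 1) M, k ≠ M →
      a * (M - k) ≠ 0 ∨ b * (M - k) ≠ 0 ∨ c * (M - k) ≠ 0 := fun k hk hkM => by
    have := H.one_le_add
    have : M - k ≠ 0 := by simp at hk; omega
    simp only [ne_eq, Nat.mul_eq_zero, not_or]
    omega
  simp only [Fval]
  rw [sum_eq_zero fun k hk => by rcases hfirst k hk with h | h <;> simp [zero_pow h],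
    sum_eq_single_of_mem M hM fun k hk hkM => by
      rcases hsecond k hk hkM with h | h | h <;> simp [zero_pow h]]
  simp [H.mᵢ_pos.ne']

theorem Fval_zero_zero {K : Type*} [Field K] (H : Admissible m₁ m₂ M mᵢ a b c α β γ)
    {x₂ : K} (hx₂ : b = 0 ∨ x₂ = 0) (y z : K) :
    Fval m₁ m₂ M mᵢ a b c α β γ 0 0 x₂ y z = y ^ mᵢ := by
  have hfirst : ∀ k ∈ Icc 1 (M - m₁),
      k * α ≠ 0 ∨ k * (γ - β - α - 1) ≠ 0 ∨ (x₂ = 0 ∧ k * β ≠ 0) := fun k hk => by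
    have hk : k ≠ 0 := by simp at hk; omega
    simp only [ne_eq, Nat.mul_eq_zero, hk, false_or]
    by_cases hα : α = 0
    · by_cases hγ : γ = β + α + 1
      · have hβ : β ≠ 0 := by
          rintro rfl
          have := H.mᵢ_add_eq
          have := H.lt_mᵢ
          simp only [hα, hγ] at *
          omega
        have hb : b ≠ 0 := fun hb => hβ (by simp [H.β_eq, hb])
        exact Or.inr (Or.inr ⟨hx₂.resolve_left hb, hβ⟩)
      · have := H.add_one_le_γ
        omega
    · exact Or.inl hα
  have hsecond : ∀ k ∈ Icc (M - m₁ + 1) M, a * (M - k) ≠ 0 ∨ (x₂ = 0 ∧ b * (M - k) ≠ 0) ∨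
      k * (a + b + c - 1) - b * (M - m₂) - a * (M - m₁) ≠ 0 := fun k hk => by
    obtain ⟨hk₁, hk₂⟩ := Finset.mem_Icc.mp hk
    have hexp := H.x₀_exponent_add hk₁ hk₂
    have := H.lt_mᵢ
    rcases hk₂.lt_or_eq with hk₂ | rfl
    · simp only [ne_eq, Nat.mul_eq_zero, show M - k ≠ 0 by omega, or_false]
      by_cases ha : a = 0
      · by_cases hb : b = 0
        · refine Or.inr (Or.inr fun h0 => ?_)
          have hmᵢ := H.mᵢ_eq
          simp only [ha, hb, zero_add, zero_mul, add_zero, Nat.sub_zero] at hexp hmᵢ h0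
          have hc : 1 < c := by nlinarith
          have : (M - k) * (c - 1) < M * (c - 1) :=
            Nat.mul_lt_mul_of_pos_right (by omega) (by omega)
          have : M * (c - 1) + M = c * M := by
            rw [← Nat.mul_succ, Nat.succ_eq_add_one, Nat.sub_add_cancel hc.le, mul_comm]
          omega
        · exact Or.inr (Or.inl ⟨hx₂.resolve_left hb, hb⟩)
      · exact Or.inl ha
    · simp only [Nat.sub_self, zero_mul, add_zero] at hexp
      omega
  simp only [Fval]
  rw [sum_eq_zero fun k hk => by
      rcases hfirst k hk with h | h | ⟨rfl, h⟩ <;> simp [zero_pow h],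
    sum_eq_zero fun k hk => by
      rcases hsecond k hk with h | ⟨rfl, h⟩ | h <;> simp [zero_pow h]]
  simp

theorem Fval_homogeneous {K : Type*} [CommRing K] (H : Admissible m₁ m₂ M mᵢ a b c α β γ)
    (t x₁ x₂ y z : K) :
    Fval m₁ m₂ M mᵢ a b c α β γ t (t * x₁) (t * x₂) (t * y) (t * z)
      = t ^ mᵢ * Fval m₁ m₂ M mᵢ a b c α β γ 1 x₁ x₂ y z := by
  simp only [Fval, mul_add, mul_sum, one_pow, mul_one]
  refine congrArg₂ (· + ·) (congrArg₂ (· + ·) ?_ ?_) ?_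
  · ring
  · refine sum_congr rfl fun k hk => ?_
    have hkγ := H.mul_γ_le (mem_Icc.mp hk).2
    have hγ := H.add_one_le_γ
    have hdeg : k * α + k * β + (mᵢ - k * γ) + k + k * (γ - β - α - 1) = mᵢ := by
      zify [hkγ, hγ, show β ≤ γ by omega, show α ≤ γ - β by omega, show 1 ≤ γ - β - α by omega]
      ring
    rw [← congrArg (t ^ ·) hdeg]
    ring
  · refine sum_congr rfl fun k hk => ?_
    obtain ⟨hk₁, hk₂⟩ := Finset.mem_Icc.mp hk
    have hdeg : a * (M - k) + b * (M - k) + c * (M - k) + k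
        + (k * (a + b + c - 1) - b * (M - m₂) - a * (M - m₁)) = mᵢ := by
      have h := H.x₀_exponent_add hk₁ hk₂
      have hs : (M - k) * (a + b + c - 1) + (M - k) = a * (M - k) + b * (M - k) + c * (M - k) := by
        rw [← Nat.mul_succ, Nat.succ_eq_add_one, Nat.sub_add_cancel H.one_le_add]; ring
      omega
    rw [← congrArg (t ^ ·) hdeg]
    ring

theorem Fval_one_pow_eq_zero {K : Type*} [Field K]
    (H : Admissible m₁ m₂ M mᵢ a b c α β γ) (t : K) :
    Fval m₁ m₂ M mᵢ a b c α β γ 1 (t ^ m₁) (t ^ m₂) (t ^ M) (t ^ mᵢ) = 0 := by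
  by_cases ht : t = 0
  · subst ht
    rw [zero_pow H.m₁_pos.ne', zero_pow H.m₂_pos.ne', zero_pow H.M_pos.ne',
      zero_pow H.mᵢ_pos.ne', H.Fval_one_zero, zero_pow H.M_pos.ne', mul_zero]
  · have hpow : ∀ e e' : ℕ, (t ^ e) ^ e' = (t ^ e') ^ e := fun e e' => by
      rw [← pow_mul, ← pow_mul, mul_comm]
    rw [H.Fval_one_eq_zero_iff (pow_ne_zero _ ht) (pow_ne_zero _ ht) (pow_ne_zero _ ht)
      (hpow _ _) (hpow _ _), ← pow_mul, ← pow_mul, ← pow_mul, ← pow_add, ← pow_add]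
    congr 1
    linarith [H.mᵢ_add_eq]

end Admissible

def AdmissibleUpTo (n : ℕ) (m a b c α β γ : ℕ → ℕ) : Prop :=
  ∀ i, 3 ≤ i → i ≤ n →
    Admissible (m 1) (m 2) (m (i - 1)) (m i) (a i) (b i) (c i) (α i) (β i) (γ i)

section ZeroLocus

variable {K : Type*} [Field K] {n : ℕ} {m a b c α β γ : ℕ → ℕ}

theorem AdmissibleUpTo.pos (hH : AdmissibleUpTo n m a b c α β γ) (hn : 3 ≤ n)
    {j : ℕ} (hj : 1 ≤ j) (hjn : j ≤ n) : 0 < m j := by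
  rcases Nat.lt_or_ge j 3 with hj₃ | hj₃
  · interval_cases j
    exacts [(hH 3 le_rfl hn).m₁_pos, (hH 3 le_rfl hn).m₂_pos]
  · exact (hH j hj₃ hjn).mᵢ_pos

theorem eq_zero_of_zeroLocus_of_x₀_eq_zero (hn : 3 ≤ n)
    (hH : AdmissibleUpTo n m a b c α β γ)
    (hb₃ : b 3 = 0) {x : ℕ → K} (hx₀ : x 0 = 0)
    (hF₁ : x 1 ^ m 2 - x 2 ^ m 1 * x 0 ^ (m 2 - m 1) = 0)
    (hF : ∀ i, 3 ≤ i → i ≤ n → Fval (m 1) (m 2) (m (i - 1)) (m i) (a i) (b i) (c i) (α i) (β i)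
      (γ i) (x 0) (x 1) (x 2) (x (i - 1)) (x i) = 0) :
    ∀ j, 1 ≤ j → j < n → x j = 0 := by
  have H₃ := hH 3 le_rfl hn
  have hx₁ : x 1 = 0 := by
    rw [hx₀, zero_pow (Nat.sub_ne_zero_of_lt H₃.m₁_lt_m₂), mul_zero, sub_zero] at hF₁
    exact pow_eq_zero_iff H₃.m₂_pos.ne' |>.mp hF₁
  have step : ∀ i, 2 ≤ i → i < n → (b (i + 1) = 0 ∨ x 2 = 0) → x i = 0 := by
    intro i hi hin hx₂
    have H := hH (i + 1) (by omega) hin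
    have h := hF (i + 1) (by omega) hin
    rw [Nat.add_sub_cancel] at H h
    rw [hx₀, hx₁, H.Fval_zero_zero hx₂] at h
    exact pow_eq_zero_iff H.mᵢ_pos.ne' |>.mp h
  have hx₂ : x 2 = 0 := step 2 le_rfl (by omega) (Or.inl hb₃)
  intro j hj hjn
  rcases hj.eq_or_lt with rfl | hj
  · exact hx₁
  · exact step j hj hjn (Or.inr hx₂)

theorem eq_zero_of_Fval_one_eq_zero
    (hH : AdmissibleUpTo n m a b c α β γ)
    {y : ℕ → K} (hy₁ : y 1 = 0) (hy₂ : y 2 = 0)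
    (hF : ∀ i, 3 ≤ i → i ≤ n → Fval (m 1) (m 2) (m (i - 1)) (m i) (a i) (b i) (c i) (α i) (β i)
      (γ i) 1 (y 1) (y 2) (y (i - 1)) (y i) = 0) :
    ∀ j, 1 ≤ j → j ≤ n → y j = 0 := by
  have hchain : ∀ i, 2 ≤ i → i ≤ n → y i = 0 := by
    intro i hi
    induction i, hi using Nat.le_induction with
    | base => exact fun _ => hy₂
    | succ i hi ih =>
      intro hin
      have H := hH (i + 1) (by omega) hin
      have h := hF (i + 1) (by omega) hin
      rw [Nat.add_sub_cancel] at H h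
      rw [hy₁, hy₂, ih (by omega), H.Fval_one_zero] at h
      exact pow_eq_zero_iff H.M_pos.ne' |>.mp ((mul_eq_zero.mp h).resolve_left (by simp))
  intro j hj hjn
  rcases hj.eq_or_lt with rfl | hj
  · exact hy₁
  · exact hchain j hj hjn

theorem pow_eq_pow_of_Fval_one_eq_zero
    (hH : AdmissibleUpTo n m a b c α β γ)
    {y : ℕ → K} (hy₁ : y 1 ≠ 0) (hy₂ : y 2 ≠ 0) (hy₁₂ : y 1 ^ m 2 = y 2 ^ m 1)
    (hF : ∀ i, 3 ≤ i → i ≤ n → Fval (m 1) (m 2) (m (i - 1)) (m i) (a i) (b i) (c i) (α i) (β i)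
      (γ i) 1 (y 1) (y 2) (y (i - 1)) (y i) = 0) :
    ∀ i, 2 ≤ i → i ≤ n → ∀ l j, 1 ≤ l → l ≤ j → j ≤ i → y j ≠ 0 ∧ y j ^ m l = y l ^ m j := by
  intro i hi
  induction i, hi using Nat.le_induction with
  | base =>
    intro _ l j hl hlj hj
    interval_cases j <;> interval_cases l
    exacts [⟨hy₁, rfl⟩, ⟨hy₂, hy₁₂.symm⟩, ⟨hy₂, rfl⟩]
  | succ i hi ih =>
    intro hin l j hl hlj hj
    rcases hj.lt_or_eq with hj | rfl
    · exact ih (by omega) l j hl hlj (by omega)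
    have H := hH (i + 1) (by omega) hin
    have hF' := hF (i + 1) (by omega) hin
    rw [Nat.add_sub_cancel] at H hF'
    have hne : ∀ j, 1 ≤ j → j ≤ i → y j ≠ 0 := fun j hj hji => (ih (by omega) j j hj le_rfl hji).1
    have rel : ∀ j l, 1 ≤ j → j ≤ i → 1 ≤ l → l ≤ i → y j ^ m l = y l ^ m j := by
      intro j l hj hji hl hli
      rcases le_total l j with h | h
      · exact (ih (by omega) l j hl h hji).2
      · exact (ih (by omega) j l hj h hli).2.symm
    have hprod := (H.Fval_one_eq_zero_iff hy₁ hy₂ (hne i (by omega) le_rfl)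
      (rel 1 i le_rfl (by omega) (by omega) le_rfl) (rel 2 i (by omega) hi (by omega) le_rfl)
      (y (i + 1))).mp hF'
    refine ⟨fun h0 => pow_ne_zero _ (hne i (by omega) le_rfl) (by rw [← hprod, h0, mul_zero]), ?_⟩
    rcases hlj.lt_or_eq with hl' | rfl
    · exact pow_eq_pow_of_mul_eq_pow (hne l hl (by omega)) (rel 1 l le_rfl (by omega) hl (by omega))
        (rel 2 l (by omega) hi hl (by omega)) (rel i l (by omega) le_rfl hl (by omega))
        H.mᵢ_add_eq hprod
    · rfl

theorem exists_eq_pow_of_Fval_one_eq_zero (hn : 3 ≤ n) (hgcd : (Icc 1 n).gcd m = 1)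
    (hH : AdmissibleUpTo n m a b c α β γ)
    {y : ℕ → K} (hy₁₂ : y 1 ^ m 2 = y 2 ^ m 1)
    (hF : ∀ i, 3 ≤ i → i ≤ n → Fval (m 1) (m 2) (m (i - 1)) (m i) (a i) (b i) (c i) (α i) (β i)
      (γ i) 1 (y 1) (y 2) (y (i - 1)) (y i) = 0) :
    ∃ t : K, ∀ j, 1 ≤ j → j ≤ n → y j = t ^ m j := by
  have H₃ := hH 3 le_rfl hn
  by_cases hy₁ : y 1 = 0
  · have hy₂ : y 2 = 0 := by
      rw [hy₁, zero_pow H₃.m₂_pos.ne', eq_comm, pow_eq_zero_iff H₃.m₁_pos.ne'] at hy₁₂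
      exact hy₁₂
    refine ⟨0, fun j hj hjn => ?_⟩
    rw [eq_zero_of_Fval_one_eq_zero hH hy₁ hy₂ hF j hj hjn,
      zero_pow (hH.pos hn hj hjn).ne']
  · have hy₂ : y 2 ≠ 0 := fun h => hy₁ <| by
      rwa [h, zero_pow H₃.m₁_pos.ne', pow_eq_zero_iff H₃.m₂_pos.ne'] at hy₁₂
    have hrel := pow_eq_pow_of_Fval_one_eq_zero hH hy₁ hy₂ hy₁₂ hF n (by omega) le_rfl
    obtain ⟨t, ht⟩ := exists_pow_eq_of_pow_eq_pow hgcd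
      (fun j hj => (hrel j j (Finset.mem_Icc.mp hj).1 le_rfl (Finset.mem_Icc.mp hj).2).1)
      fun j hj l hl => by
        obtain ⟨hj₁, hj₂⟩ := Finset.mem_Icc.mp hj
        obtain ⟨hl₁, hl₂⟩ := Finset.mem_Icc.mp hl
        rcases le_total l j with h | h
        · exact (hrel l j hl₁ h hj₂).2
        · exact (hrel j l hj₁ h hl₂).2.symm
    exact ⟨t, fun j hj hjn => (ht j (Finset.mem_Icc.mpr ⟨hj, hjn⟩)).symm⟩

theorem exists_eq_cone_of_zeroLocus [IsAlgClosed K] (hn : 3 ≤ n)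
    (hm : StrictMonoOn m (Set.Icc 1 n)) (hgcd : (Icc 1 n).gcd m = 1)
    (hH : AdmissibleUpTo n m a b c α β γ)
    (hb₃ : b 3 = 0) {x : ℕ → K} (hF₁ : x 1 ^ m 2 - x 2 ^ m 1 * x 0 ^ (m 2 - m 1) = 0)
    (hF : ∀ i, 3 ≤ i → i ≤ n → Fval (m 1) (m 2) (m (i - 1)) (m i) (a i) (b i) (c i) (α i) (β i)
      (γ i) (x 0) (x 1) (x 2) (x (i - 1)) (x i) = 0) :
    ∃ u v : K, x 0 = u ^ m n ∧ ∀ j, 1 ≤ j → j ≤ n → x j = u ^ (m n - m j) * v ^ m j := by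
  have hmn := hH.pos hn (by omega) le_rfl
  by_cases hx₀ : x 0 = 0
  · obtain ⟨v, hv⟩ := IsAlgClosed.exists_pow_nat_eq (x n) hmn
    have hx := eq_zero_of_zeroLocus_of_x₀_eq_zero hn hH hb₃ hx₀ hF₁ hF
    refine ⟨0, v, by rw [hx₀, zero_pow hmn.ne'], fun j hj hjn => ?_⟩
    rcases hjn.lt_or_eq with hjn | rfl
    · rw [hx j hj hjn,
        zero_pow (Nat.sub_ne_zero_of_lt (hm ⟨hj, hjn.le⟩ ⟨by omega, le_rfl⟩ hjn)), zero_mul]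
    · rw [Nat.sub_self, pow_zero, one_mul, hv]
  have hxy : ∀ j, x 0 * (x j / x 0) = x j := fun j => mul_div_cancel₀ _ hx₀
  obtain ⟨t, ht⟩ := exists_eq_pow_of_Fval_one_eq_zero (y := fun j => x j / x 0) hn hgcd hH
    (by
      have h := sub_mul_pow_eq_pow_mul (hH 3 le_rfl hn).m₁_lt_m₂.le (x 0) (x 1 / x 0) (x 2 / x 0)
      rw [hxy, hxy, hF₁, eq_comm, mul_eq_zero, sub_eq_zero] at h
      exact h.resolve_left (pow_ne_zero _ hx₀))
    fun i hi hin => by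
      have h := (hH i hi hin).Fval_homogeneous (x 0) (x 1 / x 0) (x 2 / x 0) (x (i - 1) / x 0)
        (x i / x 0)
      rw [hxy, hxy, hxy, hxy, hF i hi hin, eq_comm, mul_eq_zero] at h
      exact h.resolve_left (pow_ne_zero _ hx₀)
  obtain ⟨u, hu⟩ := IsAlgClosed.exists_pow_nat_eq (x 0) hmn
  refine ⟨u, t * u, hu.symm, fun j hj hjn => ?_⟩
  have hsplit : u ^ m n = u ^ (m n - m j) * u ^ m j := by
    rw [← pow_add, Nat.sub_add_cancel (hm.monotoneOn ⟨hj, hjn⟩ ⟨by omega, le_rfl⟩ hjn)]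
  rw [← hxy j, ht j hj hjn, ← hu, hsplit]
  ring

theorem zeroLocus_of_eq_cone (hn : 3 ≤ n) (hm : StrictMonoOn m (Set.Icc 1 n))
    (hH : AdmissibleUpTo n m a b c α β γ)
    {x : ℕ → K} {u v : K} (hu : x 0 = u ^ m n)
    (hx : ∀ j, 1 ≤ j → j ≤ n → x j = u ^ (m n - m j) * v ^ m j) :
    x 1 ^ m 2 - x 2 ^ m 1 * x 0 ^ (m 2 - m 1) = 0 ∧
      ∀ i, 3 ≤ i → i ≤ n → Fval (m 1) (m 2) (m (i - 1)) (m i) (a i) (b i) (c i) (α i) (β i)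
        (γ i) (x 0) (x 1) (x 2) (x (i - 1)) (x i) = 0 := by
  have H₃ := hH 3 le_rfl hn
  by_cases hu₀ : u = 0
  · have hx₀ : x 0 = 0 := by rw [hu, hu₀, zero_pow (hH.pos hn (by omega) le_rfl).ne']
    have hx : ∀ j, 1 ≤ j → j < n → x j = 0 := fun j hj hjn => by
      rw [hx j hj hjn.le, hu₀,
        zero_pow (Nat.sub_ne_zero_of_lt (hm ⟨hj, hjn.le⟩ ⟨by omega, le_rfl⟩ hjn)), zero_mul]
    refine ⟨by rw [hx 1 le_rfl (by omega), zero_pow H₃.m₂_pos.ne', hx₀,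
      zero_pow (Nat.sub_ne_zero_of_lt H₃.m₁_lt_m₂), mul_zero, sub_zero], fun i hi hin => ?_⟩
    rw [hx₀, hx 1 le_rfl (by omega),
      (hH i hi hin).Fval_zero_zero (Or.inr (hx 2 (by omega) (by omega))),
      hx (i - 1) (by omega) (by omega), zero_pow (hH i hi hin).mᵢ_pos.ne']
  have hxt : ∀ j, 1 ≤ j → j ≤ n → x j = x 0 * (v / u) ^ m j := fun j hj hjn => by
    rw [hx j hj hjn, hu, pow_sub₀ _ hu₀ (hm.monotoneOn ⟨hj, hjn⟩ ⟨by omega, le_rfl⟩ hjn), div_pow]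
    ring
  refine ⟨?_, fun i hi hin => ?_⟩
  · rw [hxt 1 le_rfl (by omega), hxt 2 (by omega) (by omega),
      sub_mul_pow_eq_pow_mul H₃.m₁_lt_m₂.le, ← pow_mul, ← pow_mul, Nat.mul_comm (m 2), sub_self,
      mul_zero]
  · rw [hxt 1 le_rfl (by omega), hxt 2 (by omega) (by omega), hxt (i - 1) (by omega) (by omega),
      hxt i (by omega) hin, (hH i hi hin).Fval_homogeneous, (hH i hi hin).Fval_one_pow_eq_zero,
      mul_zero]

end ZeroLocus

end MonomialCurve

theorem stmt_12_general {K : Type*} [Field K] [IsAlgClosed K] (n : ℕ) (hn : 3 ≤ n)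
    (m a b c α β γ : ℕ → ℕ)
    (hpos : ∀ i, 1 ≤ i → i ≤ n → 0 < m i)
    (hmono : ∀ i, 1 ≤ i → i < n → m i < m (i + 1))
    (hgcd : Finset.gcd (Finset.Icc 1 n) m = 1)
    (hrep : ∀ i, 3 ≤ i → i ≤ n →
      m i = c i * m (i - 1) + b i * m 2 + a i * m 1 ∧
      m i + β i * m 2 + α i * m 1 = γ i * m (i - 1) ∧
      a i < m (i - 1) ∧ b i < m (i - 1) ∧ α i < m (i - 1) ∧ β i < m (i - 1) ∧
      β i + α i + 1 ≤ γ i ∧ β i * (m 2 - m 1) ≤ m 1 ∧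
      α i = (if a i = 0 then 0 else m (i - 1) - a i) ∧
      β i = (if b i = 0 then 0 else m (i - 1) - b i))
    (hb3 : b 3 = 0) :
    ∀ x : ℕ → K,
      (x 1 ^ m 2 - x 2 ^ m 1 * x 0 ^ (m 2 - m 1) = 0 ∧
        ∀ i, 3 ≤ i → i ≤ n →
          MvPolynomial.eval x
            (Fpoly K m i (a i) (b i) (c i) (α i) (β i) (γ i)) = 0) ↔
      ∃ u v : K, x 0 = u ^ m n ∧
        ∀ j, 1 ≤ j → j ≤ n → x j = u ^ (m n - m j) * v ^ m j := by
  have hm : StrictMonoOn m (Set.Icc 1 n) :=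
    strictMonoOn_of_lt_succ Set.ordConnected_Icc fun i _ hi hi' => by
      rw [Order.succ_eq_add_one] at hi' ⊢
      exact hmono i hi.1 (Nat.lt_of_succ_le hi'.2)
  have hH : MonomialCurve.AdmissibleUpTo n m a b c α β γ := by
    intro i hi hin
    obtain ⟨h₁, h₂, ha, hb, -, -, hγ, hβm, hα, hβ⟩ := hrep i hi hin
    have hlt : ∀ {j l}, 1 ≤ j → j < l → l ≤ n → m j < m l :=
      fun hj hjl hl => hm ⟨hj, by omega⟩ ⟨by omega, hl⟩ hjl
    exact ⟨hpos 1 le_rfl (by omega), hlt le_rfl one_lt_two (by omega),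
      hm.monotoneOn ⟨by omega, by omega⟩ ⟨by omega, by omega⟩ (by omega),
      hlt (by omega) (by omega) hin, h₁, h₂, ha, hb, hγ, hβm, hα, hβ⟩
  intro x
  simp only [MonomialCurve.eval_Fpoly]
  exact ⟨fun ⟨hF₁, hF⟩ => MonomialCurve.exists_eq_cone_of_zeroLocus hn hm hgcd hH hb3 hF₁ hF,
    fun ⟨u, v, hu, hx⟩ => MonomialCurve.zeroLocus_of_eq_cone hn hm hH hu hx⟩

/-- Theorem 1 (the main theorem) of the paper, for the affine cone: over an
algebraically closed field, the common zero locus of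
`F_1 = x_1^{m_2} - x_2^{m_1} x_0^{m_2-m_1}` and `F_2, …, F_{n-1}` is exactly the
affine cone `{(u^{m_n}, u^{m_n-m_1}v^{m_1}, …, u^{m_n-m_{n-1}}v^{m_{n-1}}, v^{m_n})}`
over the monomial curve `C(m_1, …, m_n)`; in particular `C(m_1, …, m_n) ⊆ ℙⁿ`
is a set-theoretic complete intersection. -/
theorem stmt_12 {K : Type*} [Field K] [IsAlgClosed K] (n : ℕ) (hn : 3 ≤ n)
    (m a b c α β γ : ℕ → ℕ)
    (hpos : ∀ i, 1 ≤ i → i ≤ n → 0 < m i)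
    (hmono : ∀ i, 1 ≤ i → i < n → m i < m (i + 1))
    (hgcd : Finset.gcd (Finset.Icc 1 n) m = 1)
    (hrep : ∀ i, 3 ≤ i → i ≤ n →
      m i = c i * m (i - 1) + b i * m 2 + a i * m 1 ∧
      m i + β i * m 2 + α i * m 1 = γ i * m (i - 1) ∧
      a i < m (i - 1) ∧ b i < m (i - 1) ∧ α i < m (i - 1) ∧ β i < m (i - 1) ∧
      β i + α i + 1 ≤ γ i ∧ β i * (m 2 - m 1) ≤ m 1 ∧
      α i = (if a i = 0 then 0 else m (i - 1) - a i) ∧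
      β i = (if b i = 0 then 0 else m (i - 1) - b i))
    (hb3 : b 3 = 0) (hβ3 : β 3 = 0) :
    ∀ x : ℕ → K,
      (x 1 ^ m 2 - x 2 ^ m 1 * x 0 ^ (m 2 - m 1) = 0 ∧
        ∀ i, 3 ≤ i → i ≤ n →
          MvPolynomial.eval x
            (Fpoly K m i (a i) (b i) (c i) (α i) (β i) (γ i)) = 0) ↔
      ∃ u v : K, x 0 = u ^ m n ∧
        ∀ j, 1 ≤ j → j ≤ n → x j = u ^ (m n - m j) * v ^ m j :=
  stmt_12_general n hn m a b c α β γ hpos hmono hgcd hrep hb3
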